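/- Every circle-center set contains an isosceles triangle whose vertex angle is strictly between π/6 and 5π/6 in measure: if S ⊆ ℝ² is not contained in any affine line and contains its circle centers, then there exist non-collinear points A, B, C ∈ S with dist(C,A) = dist(C,B) and π/6 < ∠ACB < 5π/6. -/

import Mathlib

/-!
Start from a non-collinear triple of `S`; its circumcenter `O` lies in `S` and, with two of the
three points, spans an isosceles triangle with apex `O`. For an isosceles triangle `ABC` with
apex `C` and apex angle `θ`, the circumcenter `O` of `ABC` is again in `S`, and by the inscribed
angle theorem `ABO` is isosceles with apex angle `π - |π - 2θ|`. One such step turns an apex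
angle `θ ≥ 5π/6` into `2π - 2θ ≤ π/3`, and repeated steps double an apex angle `θ ≤ π/6`
until it first exceeds `π/6`, at which point it is at most `π/3`.
-/

open Real EuclideanGeometry

/-- A set in the Euclidean plane contains its circle centers if, whenever it contains
three non-collinear points, it contains the point equidistant from all three
(the circumcenter of the triangle they form). -/
def ContainsCircleCenters (S : Set (EuclideanSpace ℝ (Fin 2))) : Prop :=
  ∀ A ∈ S, ∀ B ∈ S, ∀ C ∈ S,
    ¬ Collinear ℝ ({A, B, C} : Set (EuclideanSpace ℝ (Fin 2))) →
    ∀ O : EuclideanSpace ℝ (Fin 2),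
      dist O A = dist O B → dist O A = dist O C → O ∈ S

open Module

theorem exists_not_collinear_triple {k V P : Type*} [DivisionRing k] [AddCommGroup V]
    [Module k V] [AddTorsor V P] {s : Set P} (h : ¬Collinear k s) :
    ∃ p₁ ∈ s, ∃ p₂ ∈ s, ∃ p₃ ∈ s, ¬Collinear k ({p₁, p₂, p₃} : Set P) := by
  by_contra! hs
  apply h
  obtain rfl | ⟨p₁, hp₁⟩ := s.eq_empty_or_nonempty
  · exact collinear_empty k P
  by_cases hsub : s ⊆ {p₁}
  · exact (collinear_singleton k p₁).subset hsub
  obtain ⟨p₂, hp₂, hne⟩ := Set.not_subset.mp hsub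
  rw [collinear_iff_of_mem hp₁]
  refine ⟨p₂ -ᵥ p₁, fun p hp => ?_⟩
  have hline : (p -ᵥ p₁) +ᵥ p₁ ∈ line[k, p₁, p₂] := by
    rw [vsub_vadd]
    exact (hs p₁ hp₁ p₂ hp₂ p hp).mem_affineSpan_of_mem_of_ne (by simp) (by simp) (by simp)
      (Ne.symm hne)
  obtain ⟨r, hr⟩ := vadd_left_mem_affineSpan_pair.mp hline
  exact ⟨r, by rw [hr, vsub_vadd]⟩

theorem Real.Angle.abs_toReal_two_zsmul (θ : Real.Angle) :
    |((2 : ℤ) • θ).toReal| = π - |π - 2 * (|θ.toReal|)| := by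
  have h₁ := θ.neg_pi_lt_toReal
  have h₂ := θ.toReal_le_pi
  rcases le_or_gt θ.toReal (-π / 2) with h | h
  · rw [two_zsmul_toReal_eq_two_mul_add_two_pi.mpr h, abs_of_neg (by linarith : θ.toReal < 0),
      abs_of_nonneg (by linarith), abs_of_nonpos (by linarith)]
    ring
  rcases le_or_gt θ.toReal (π / 2) with h' | h'
  · have : |θ.toReal| ≤ π / 2 := abs_le.mpr ⟨by linarith, h'⟩
    rw [two_zsmul_toReal_eq_two_mul.mpr ⟨h, h'⟩, abs_mul, abs_two,
      abs_of_nonneg (by linarith : 0 ≤ π - 2 * |θ.toReal|)]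
    ring
  · rw [two_zsmul_toReal_eq_two_mul_sub_two_pi.mpr h', abs_of_pos (by linarith : 0 < θ.toReal),
      abs_of_nonpos (by linarith), abs_of_nonpos (by linarith)]
    ring

section EuclideanPlane

variable {V P : Type*} [NormedAddCommGroup V] [InnerProductSpace ℝ V] [MetricSpace P]
  [NormedAddTorsor V P]

theorem cospherical_of_not_collinear {p₁ p₂ p₃ : P} (h : ¬Collinear ℝ ({p₁, p₂, p₃} : Set P)) :
    Cospherical ({p₁, p₂, p₃} : Set P) := by
  let T : Affine.Simplex ℝ P 2 := ⟨![p₁, p₂, p₃], affineIndependent_iff_not_collinear_set.mpr h⟩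
  refine ⟨T.circumcenter, T.circumradius, ?_⟩
  simp only [Set.mem_insert_iff, Set.mem_singleton_iff, forall_eq_or_imp, forall_eq]
  exact ⟨T.dist_circumcenter_eq_circumradius 0, T.dist_circumcenter_eq_circumradius 1,
    T.dist_circumcenter_eq_circumradius 2⟩

theorem EuclideanGeometry.Sphere.angle_center_eq_pi_sub_abs [Fact (finrank ℝ V = 2)]
    {s : Sphere P} {p₁ p₂ p₃ : P} (hp₁ : p₁ ∈ s) (hp₂ : p₂ ∈ s) (hp₃ : p₃ ∈ s)
    (hp₂p₁ : p₂ ≠ p₁) (hp₂p₃ : p₂ ≠ p₃) :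
    ∠ p₁ s.center p₃ = π - |π - 2 * ∠ p₁ p₂ p₃| := by
  have : FiniteDimensional ℝ V := .of_fact_finrank_eq_two
  let _ : Module.Oriented ℝ V (Fin 2) := ⟨Basis.orientation (finBasisOfFinrankEq _ _ Fact.out)⟩
  rw [angle_eq_abs_oangle_toReal (s.ne_center_of_mem_of_mem_of_ne hp₁ hp₂ hp₂p₁.symm)
      (s.ne_center_of_mem_of_mem_of_ne hp₃ hp₂ hp₂p₃.symm),
    Sphere.oangle_center_eq_two_zsmul_oangle hp₁ hp₂ hp₃ hp₂p₁ hp₂p₃,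
    Real.Angle.abs_toReal_two_zsmul, angle_eq_abs_oangle_toReal hp₂p₁.symm hp₂p₃.symm]

end EuclideanPlane

instance : Fact (finrank ℝ (EuclideanSpace ℝ (Fin 2)) = 2) := ⟨finrank_euclideanSpace_fin⟩

theorem ContainsCircleCenters.exists_sphere {S : Set (EuclideanSpace ℝ (Fin 2))}
    (hcc : ContainsCircleCenters S) {A B C : EuclideanSpace ℝ (Fin 2)} (hA : A ∈ S) (hB : B ∈ S)
    (hC : C ∈ S) (hABC : ¬Collinear ℝ ({A, B, C} : Set (EuclideanSpace ℝ (Fin 2)))) :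
    ∃ s : Sphere (EuclideanSpace ℝ (Fin 2)), A ∈ s ∧ B ∈ s ∧ C ∈ s ∧ s.center ∈ S := by
  obtain ⟨s, hs⟩ := cospherical_iff_exists_sphere.mp (cospherical_of_not_collinear hABC)
  have hAs : A ∈ s := hs (by simp)
  have hBs : B ∈ s := hs (by simp)
  have hCs : C ∈ s := hs (by simp)
  refine ⟨s, hAs, hBs, hCs, hcc A hA B hB C hC hABC _ ?_ ?_⟩ <;>
    simp only [mem_sphere'.mp hAs, mem_sphere'.mp hBs, mem_sphere'.mp hCs]

def IsApexAngleIn (S : Set (EuclideanSpace ℝ (Fin 2))) (θ : ℝ) : Prop :=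
  ∃ A ∈ S, ∃ B ∈ S, ∃ C ∈ S,
    ¬Collinear ℝ ({A, B, C} : Set (EuclideanSpace ℝ (Fin 2))) ∧ dist C A = dist C B ∧
      ∠ A C B = θ

namespace IsApexAngleIn

variable {S : Set (EuclideanSpace ℝ (Fin 2))} {θ : ℝ}

theorem pos (h : IsApexAngleIn S θ) : 0 < θ := by
  obtain ⟨A, -, B, -, C, -, hABC, -, rfl⟩ := h
  rw [Set.pair_comm] at hABC
  exact angle_pos_of_not_collinear hABC

theorem lt_pi (h : IsApexAngleIn S θ) : θ < π := by
  obtain ⟨A, -, B, -, C, -, hABC, -, rfl⟩ := h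
  rw [Set.pair_comm] at hABC
  exact angle_lt_pi_of_not_collinear hABC

theorem circumcenter (hcc : ContainsCircleCenters S) (h : IsApexAngleIn S θ) (hθ : θ ≠ π / 2) :
    IsApexAngleIn S (π - |π - 2 * θ|) := by
  have hpos := h.pos
  have hlt := h.lt_pi
  obtain ⟨A, hA, B, hB, C, hC, hABC, -, rfl⟩ := h
  obtain ⟨s, hAs, hBs, hCs, hO⟩ := hcc.exists_sphere hA hB hC hABC
  have hangle := s.angle_center_eq_pi_sub_abs hAs hCs hBs (ne₁₃_of_not_collinear hABC).symm
    (ne₂₃_of_not_collinear hABC).symm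
  refine ⟨A, hA, B, hB, s.center, hO, ?_, (mem_sphere'.mp hAs).trans (mem_sphere'.mp hBs).symm,
    hangle⟩
  have hAB := ne₁₂_of_not_collinear hABC
  rw [Set.pair_comm, collinear_iff_eq_or_eq_or_angle_eq_zero_or_angle_eq_pi, hangle]
  have habs_lt : |π - 2 * ∠ A C B| < π := abs_lt.mpr ⟨by linarith, by linarith⟩
  have habs_pos : 0 < |π - 2 * ∠ A C B| := abs_pos.mpr fun h => hθ (by linarith)
  rintro (h | h | h | h)
  · exact s.ne_center_of_mem_of_mem_of_ne hAs hBs hAB h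
  · exact s.ne_center_of_mem_of_mem_of_ne hBs hAs hAB.symm h
  all_goals linarith

theorem two_mul (hcc : ContainsCircleCenters S) (h : IsApexAngleIn S θ) (hθ : θ < π / 2) :
    IsApexAngleIn S (2 * θ) := by
  convert h.circumcenter hcc hθ.ne using 1
  rw [abs_of_pos (by linarith)]
  ring

theorem two_pi_sub_two_mul (hcc : ContainsCircleCenters S) (h : IsApexAngleIn S θ)
    (hθ : π / 2 < θ) : IsApexAngleIn S (2 * π - 2 * θ) := by
  convert h.circumcenter hcc hθ.ne' using 1
  rw [abs_of_neg (by linarith)]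
  ring

theorem exists_mem_Ioo_of_lt (hcc : ContainsCircleCenters S) (h : IsApexAngleIn S θ)
    (hθ : θ < 5 * π / 6) : ∃ φ, IsApexAngleIn S φ ∧ π / 6 < φ ∧ φ < 5 * π / 6 := by
  obtain ⟨n, hn⟩ := pow_unbounded_of_one_lt (π / 6 / θ) one_lt_two
  rw [div_lt_iff₀ h.pos] at hn
  induction n generalizing θ with
  | zero => exact ⟨θ, h, by simpa using hn, hθ⟩
  | succ n ih =>
    by_cases hlo : π / 6 < θ
    · exact ⟨θ, h, hlo, hθ⟩
    refine ih (h.two_mul hcc (by linarith [pi_pos])) (by linarith) ?_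
    rwa [pow_succ, mul_assoc] at hn

theorem exists_mem_Ioo (hcc : ContainsCircleCenters S) (h : IsApexAngleIn S θ) :
    ∃ φ, IsApexAngleIn S φ ∧ π / 6 < φ ∧ φ < 5 * π / 6 := by
  rcases lt_or_ge θ (5 * π / 6) with hθ | hθ
  · exact h.exists_mem_Ioo_of_lt hcc hθ
  · exact (h.two_pi_sub_two_mul hcc (by linarith [pi_pos])).exists_mem_Ioo_of_lt hcc
      (by linarith [h.lt_pi])

end IsApexAngleIn

theorem ContainsCircleCenters.exists_isApexAngleIn {S : Set (EuclideanSpace ℝ (Fin 2))}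
    (hline : ¬Collinear ℝ S) (hcc : ContainsCircleCenters S) : ∃ θ, IsApexAngleIn S θ := by
  obtain ⟨A, hA, B, hB, C, hC, hABC⟩ := exists_not_collinear_triple hline
  obtain ⟨s, hAs, hBs, hCs, hO⟩ := hcc.exists_sphere hA hB hC hABC
  have hAO := s.ne_center_of_mem_of_mem_of_ne hAs hBs (ne₁₂_of_not_collinear hABC)
  by_cases hABO : Collinear ℝ ({A, B, s.center} : Set (EuclideanSpace ℝ (Fin 2)))
  · by_cases hACO : Collinear ℝ ({A, C, s.center} : Set (EuclideanSpace ℝ (Fin 2)))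
    · refine absurd (collinear_triple_of_mem_affineSpan_pair (left_mem_affineSpan_pair ℝ A s.center)
        ?_ ?_) hABC
      · exact hABO.mem_affineSpan_of_mem_of_ne (by simp) (by simp) (by simp) hAO
      · exact hACO.mem_affineSpan_of_mem_of_ne (by simp) (by simp) (by simp) hAO
    · exact ⟨_, A, hA, C, hC, s.center, hO, hACO,
        (mem_sphere'.mp hAs).trans (mem_sphere'.mp hCs).symm, rfl⟩
  · exact ⟨_, A, hA, B, hB, s.center, hO, hABO,
      (mem_sphere'.mp hAs).trans (mem_sphere'.mp hBs).symm, rfl⟩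

theorem circle_center_set_isosceles_vertex_angle (S : Set (EuclideanSpace ℝ (Fin 2)))
    (hline : ¬ Collinear ℝ S) (hcc : ContainsCircleCenters S) :
    ∃ A ∈ S, ∃ B ∈ S, ∃ C ∈ S,
      ¬ Collinear ℝ ({A, B, C} : Set (EuclideanSpace ℝ (Fin 2))) ∧
      dist C A = dist C B ∧
      π / 6 < EuclideanGeometry.angle A C B ∧ EuclideanGeometry.angle A C B < 5 * π / 6 := by
  obtain ⟨θ, hθ⟩ := hcc.exists_isApexAngleIn hline
  obtain ⟨_, ⟨A, hA, B, hB, C, hC, hABC, hiso, rfl⟩, hlo, hhi⟩ := hθ.exists_mem_Ioo hcc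
  exact ⟨A, hA, B, hB, C, hC, hABC, hiso, hlo, hhi⟩
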